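/- Let $\alpha,\beta$ be positive roots of $A_{n-1}$ with $(\alpha,\beta) = 1$, $\alpha\ne\beta$, set $m = m_\alpha(\lambda)$, $m' = m_\beta(\lambda^\alpha)$, and suppose $(\lambda, \lambda^\alpha, \lambda^{\alpha,\beta})$ is admissible. Then: if $\alpha - \beta$ is a positive root, $m_\beta(\lambda) = m + m'$ and $m_{\alpha-\beta}(\lambda^\beta) = m$, so $\lambda^{\beta, \alpha-\beta} = \lambda^{\alpha,\beta}$; if $\beta - \alpha$ is a positive root, $m_{\beta-\alpha}(\lambda) = m'$ and $m_\alpha(\lambda^{\beta-\alpha}) = m + m'$, so $\lambda^{\beta-\alpha,\alpha} = \lambda^{\alpha,\beta}$. -/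
import Mathlib


open scoped Classical

/-- Number of inversions of a permutation of `Fin n` (the Coxeter length in `S_n`). -/
def invCount {n : ℕ} (σ : Equiv.Perm (Fin n)) : ℕ :=
  (Finset.univ.filter (fun p : Fin n × Fin n => p.1 < p.2 ∧ σ p.2 < σ p.1)).card

/-- The degree increment `d_α(λ)` for `λ = t_γ σ Λ` and the positive root
`α = ε_i - ε_j` (`i < j`): it equals `ℓ(r_α σ) - ℓ(σ)` if `(σΛ, α) > 0`, and
`ℓ(r_α σ) - ℓ(σ) + 2|α|` if `(σΛ, α) < 0`, where `|α| = j - i` and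
`(σΛ, ε_i - ε_j) = Λ(σ⁻¹ i) - Λ(σ⁻¹ j)`. -/
noncomputable def dval {n : ℕ} (Λ : Fin n → ℝ) (σ : Equiv.Perm (Fin n)) (i j : Fin n) : ℤ :=
  if Λ (σ.symm j) < Λ (σ.symm i) then
    (invCount (Equiv.swap i j * σ) : ℤ) - (invCount σ : ℤ)
  else
    (invCount (Equiv.swap i j * σ) : ℤ) - (invCount σ : ℤ) + 2 * ((j : ℤ) - (i : ℤ))


/-- The root `ε_i - ε_j` of `A_{n-1}`, as a vector in `ℝ^n`. -/
def rootv (n : ℕ) (i j : Fin n) : Fin n → ℝ :=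
  fun t => (if t = i then 1 else 0) - (if t = j then 1 else 0)

/-- Standard inner product on `ℝ^n`. -/
def pairing {n : ℕ} (v w : Fin n → ℝ) : ℝ := ∑ t, v t * w t

/-- `isM r λ α m` says that `m = m_α(λ)`: the unique integer with `0 < m < r`
and `m ≡ (λ, α) mod r`. -/
def isM {n : ℕ} (r : ℤ) (lam : Fin n → ℝ) (al : Fin n → ℝ) (m : ℤ) : Prop :=
  0 < m ∧ m < r ∧ ∃ c : ℤ, pairing lam al = (m : ℝ) + (r : ℝ) * (c : ℝ)


lemma invCount_cast {n : ℕ} (σ : Equiv.Perm (Fin n)) :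
    (invCount σ : ℤ) = ∑ x : Fin n, ∑ y : Fin n, (if x < y ∧ σ y < σ x then (1:ℤ) else 0) := by
  rw [invCount, Finset.card_filter, ← Finset.univ_product_univ, Finset.sum_product]
  push_cast
  rfl

-- helper sums

lemma L1 {n : ℕ} (c : Fin n) (Q : Fin n → Prop) [DecidablePred Q] :
    ∑ x : Fin n, ∑ y : Fin n, (if x = c ∧ Q y then (1:ℤ) else 0)
      = ∑ y : Fin n, (if Q y then (1:ℤ) else 0) := by
  simp [ite_and, Finset.sum_ite_eq]

lemma L2 {n : ℕ} (c : Fin n) (Q : Fin n → Prop) [DecidablePred Q] :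
    ∑ x : Fin n, ∑ y : Fin n, (if y = c ∧ Q x then (1:ℤ) else 0)
      = ∑ x : Fin n, (if Q x then (1:ℤ) else 0) := by
  have : ∀ x : Fin n, ∑ y : Fin n, (if y = c ∧ Q x then (1:ℤ) else 0) = if Q x then 1 else 0 := by
    intro x; simp [ite_and, Finset.sum_ite_eq']
  simp [this]

lemma L3 {n : ℕ} (c d : Fin n) :
    ∑ x : Fin n, ∑ y : Fin n, (if x = c ∧ y = d then (1:ℤ) else 0) = 1 := by
  simp [ite_and, Finset.sum_ite_eq]

lemma lemA {n : ℕ} (σ : Equiv.Perm (Fin n)) (i j : Fin n) (hij : i < j)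
    (hab : σ.symm i < σ.symm j) :
    (invCount (Equiv.swap i j * σ) : ℤ)
      = (invCount σ : ℤ) + 1 +
        2 * ((Finset.univ.filter
          (fun x : Fin n => σ.symm i < x ∧ x < σ.symm j ∧ i < σ x ∧ σ x < j)).card : ℤ) := by
  set τ := Equiv.swap i j * σ with hτdef
  set a := σ.symm i with ha'
  set b := σ.symm j with hb'
  have hsa : σ a = i := σ.apply_symm_apply i
  have hsb : σ b = j := σ.apply_symm_apply j
  have hτx : ∀ x : Fin n, τ x = Equiv.swap i j (σ x) := fun x => rfl
  have hτa : τ a = j := by rw [hτx, hsa, Equiv.swap_apply_left]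
  have hτb : τ b = i := by rw [hτx, hsb, Equiv.swap_apply_right]
  have habne : a ≠ b := ne_of_lt hab
  have Hgen : ∀ z : Fin n, z ≠ a → z ≠ b → τ z = σ z ∧ σ z ≠ i ∧ σ z ≠ j := by
    intro z hz1 hz2
    have g1 : σ z ≠ i := by
      intro hh; exact hz1 (by rw [ha', ← hh, Equiv.symm_apply_apply])
    have g2 : σ z ≠ j := by
      intro hh; exact hz2 (by rw [hb', ← hh, Equiv.symm_apply_apply])
    exact ⟨by rw [hτx, Equiv.swap_apply_of_ne_of_ne g1 g2], g1, g2⟩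
  have key : ∀ x y : Fin n,
      ((if x < y ∧ τ y < τ x then (1:ℤ) else 0) - (if x < y ∧ σ y < σ x then (1:ℤ) else 0))
      = (if x = a ∧ y = b then (1:ℤ) else 0)
        + (if x = a ∧ (a < y ∧ (i < σ y ∧ σ y < j)) then (1:ℤ) else 0)
        - (if y = a ∧ (x < a ∧ (i < σ x ∧ σ x < j)) then (1:ℤ) else 0)
        - (if x = b ∧ (b < y ∧ (i < σ y ∧ σ y < j)) then (1:ℤ) else 0)
        + (if y = b ∧ (x < b ∧ (i < σ x ∧ σ x < j)) then (1:ℤ) else 0) := by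
    intro x y
    rcases eq_or_ne x a with rfl | hxa
    · rcases eq_or_ne y a with rfl | hya
      · simp [hτa, hsa, habne, lt_irrefl]
      · rcases eq_or_ne y b with rfl | hyb
        · simp [hτa, hτb, hsa, hsb, hab, hij, habne, lt_irrefl, lt_asymm hij, lt_asymm hab]
        · obtain ⟨he, g1, g2⟩ := Hgen y hya hyb
          simp only [he, hτa, hsa, hya, hyb, habne, and_false, false_and, and_true, true_and,
            if_false, eq_self_iff_true, if_true, sub_zero, add_zero, zero_add]
          have hv1 : (σ y).val ≠ i.val := fun hh => g1 (Fin.ext hh)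
          have hv2 : (σ y).val ≠ j.val := fun hh => g2 (Fin.ext hh)
          have hijv : i.val < j.val := hij
          simp only [Fin.lt_def]
          split_ifs <;> omega
    · rcases eq_or_ne x b with rfl | hxb
      · rcases eq_or_ne y a with rfl | hya
        · simp [hτa, hτb, hsa, hsb, habne, Ne.symm habne, lt_asymm hab, lt_irrefl]
        · rcases eq_or_ne y b with rfl | hyb
          · simp [hτb, hsb, habne, Ne.symm habne, lt_irrefl]
          · obtain ⟨he, g1, g2⟩ := Hgen y hya hyb
            simp only [he, hτb, hsb, hya, hyb, habne, Ne.symm habne, and_false, false_and,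
              and_true, true_and, if_false, eq_self_iff_true, if_true, sub_zero, add_zero,
              zero_add, zero_sub]
            have hv1 : (σ y).val ≠ i.val := fun hh => g1 (Fin.ext hh)
            have hv2 : (σ y).val ≠ j.val := fun hh => g2 (Fin.ext hh)
            have hijv : i.val < j.val := hij
            simp only [Fin.lt_def]
            split_ifs <;> omega
      · obtain ⟨hex, g1x, g2x⟩ := Hgen x hxa hxb
        rcases eq_or_ne y a with rfl | hya
        · simp only [hex, hτa, hsa, hxa, hxb, habne, and_false, false_and, and_true, true_and,
            if_false, eq_self_iff_true, if_true, sub_zero, add_zero, zero_add, zero_sub]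
          have hv1 : (σ x).val ≠ i.val := fun hh => g1x (Fin.ext hh)
          have hv2 : (σ x).val ≠ j.val := fun hh => g2x (Fin.ext hh)
          have hijv : i.val < j.val := hij
          simp only [Fin.lt_def]
          split_ifs <;> omega
        · rcases eq_or_ne y b with rfl | hyb
          · simp only [hex, hτb, hsb, hxa, hxb, hya, habne, Ne.symm habne, and_false, false_and,
              and_true, true_and, if_false, eq_self_iff_true, if_true, sub_zero, add_zero,
              zero_add]
            have hv1 : (σ x).val ≠ i.val := fun hh => g1x (Fin.ext hh)
            have hv2 : (σ x).val ≠ j.val := fun hh => g2x (Fin.ext hh)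
            have hijv : i.val < j.val := hij
            simp only [Fin.lt_def]
            split_ifs <;> omega
          · obtain ⟨hey, g1y, g2y⟩ := Hgen y hya hyb
            simp [hex, hey, hxa, hxb, hya, hyb]
  have comb : ∀ w : Fin n,
    ((if a < w ∧ (i < σ w ∧ σ w < j) then (1:ℤ) else 0)
      - (if w < a ∧ (i < σ w ∧ σ w < j) then (1:ℤ) else 0)
      - (if b < w ∧ (i < σ w ∧ σ w < j) then (1:ℤ) else 0)
      + (if w < b ∧ (i < σ w ∧ σ w < j) then (1:ℤ) else 0))
    = 2 * (if a < w ∧ w < b ∧ i < σ w ∧ σ w < j then (1:ℤ) else 0) := by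
    intro w
    by_cases hR : i < σ w ∧ σ w < j
    · have hwa : w ≠ a := by
        intro h; subst h; rw [hsa] at hR; exact lt_irrefl i hR.1
      have hwb : w ≠ b := by
        intro h; subst h; rw [hsb] at hR; exact lt_irrefl j hR.2
      have hva : w.val ≠ a.val := fun hh => hwa (Fin.ext hh)
      have hvb : w.val ≠ b.val := fun hh => hwb (Fin.ext hh)
      have habv : a.val < b.val := hab
      simp only [hR, and_true, true_and, Fin.lt_def]
      split_ifs <;> omega
    · have : ¬ (a < w ∧ w < b ∧ i < σ w ∧ σ w < j) := by
        intro hh; exact hR ⟨hh.2.2.1, hh.2.2.2⟩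
      simp [hR, this]
  have hs1 : (invCount τ : ℤ) - invCount σ
      = ∑ x : Fin n, ∑ y : Fin n,
          ((if x < y ∧ τ y < τ x then (1:ℤ) else 0) - (if x < y ∧ σ y < σ x then (1:ℤ) else 0)) := by
    rw [invCount_cast τ, invCount_cast σ, ← Finset.sum_sub_distrib]
    simp only [← Finset.sum_sub_distrib]
  rw [hτdef] at hs1 ⊢
  have hs2 := hs1
  rw [Finset.sum_congr rfl (fun x _ => Finset.sum_congr rfl (fun y _ => key x y))] at hs2
  simp only [Finset.sum_add_distrib, Finset.sum_sub_distrib] at hs2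
  rw [L3, L1 a (fun y => a < y ∧ (i < σ y ∧ σ y < j)),
      L2 a (fun x => x < a ∧ (i < σ x ∧ σ x < j)),
      L1 b (fun y => b < y ∧ (i < σ y ∧ σ y < j)),
      L2 b (fun x => x < b ∧ (i < σ x ∧ σ x < j))] at hs2
  have hs3 : ∑ w : Fin n, (if a < w ∧ (i < σ w ∧ σ w < j) then (1:ℤ) else 0)
      - ∑ w : Fin n, (if w < a ∧ (i < σ w ∧ σ w < j) then (1:ℤ) else 0)
      - ∑ w : Fin n, (if b < w ∧ (i < σ w ∧ σ w < j) then (1:ℤ) else 0)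
      + ∑ w : Fin n, (if w < b ∧ (i < σ w ∧ σ w < j) then (1:ℤ) else 0)
      = ∑ w : Fin n, (2 * (if a < w ∧ w < b ∧ i < σ w ∧ σ w < j then (1:ℤ) else 0)) := by
    simp only [← Finset.sum_sub_distrib, ← Finset.sum_add_distrib]
    exact Finset.sum_congr rfl (fun w _ => comb w)
  have hcard : ∑ w : Fin n, (if a < w ∧ w < b ∧ i < σ w ∧ σ w < j then (1:ℤ) else 0)
      = ((Finset.univ.filter (fun x : Fin n => a < x ∧ x < b ∧ i < σ x ∧ σ x < j)).card : ℤ) := by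
    rw [Finset.card_filter]
    push_cast
    rfl
  rw [← Finset.mul_sum] at hs3
  linarith [hs2, hs3, hcard]

lemma D1 {n : ℕ} (Λ : Fin n → ℝ) (hΛ : ∀ a b : Fin n, a < b → 0 < Λ a - Λ b)
    (σ : Equiv.Perm (Fin n)) (i j : Fin n) (hij : i < j) (hab : σ.symm i < σ.symm j)
    (hd : dval Λ σ i j = 1) :
    ∀ x : Fin n, i < σ x → σ x < j → ¬(σ.symm i < x ∧ x < σ.symm j) := by
  have hbr : Λ (σ.symm j) < Λ (σ.symm i) := by have := hΛ _ _ hab; linarith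
  rw [dval, if_pos hbr, lemA σ i j hij hab] at hd
  have hN : ((Finset.univ.filter
      (fun x : Fin n => σ.symm i < x ∧ x < σ.symm j ∧ i < σ x ∧ σ x < j)).card : ℤ) = 0 := by
    linarith
  have hN' : (Finset.univ.filter
      (fun x : Fin n => σ.symm i < x ∧ x < σ.symm j ∧ i < σ x ∧ σ x < j)).card = 0 := by
    exact_mod_cast hN
  rw [Finset.card_eq_zero] at hN'
  intro x h1 h2 h3
  have hx : x ∈ Finset.univ.filter
      (fun x : Fin n => σ.symm i < x ∧ x < σ.symm j ∧ i < σ x ∧ σ x < j) := by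
    simp [h1, h2, h3.1, h3.2]
  rw [hN'] at hx
  exact absurd hx (Finset.notMem_empty x)

lemma card_val_interval {n : ℕ} (τ : Equiv.Perm (Fin n)) (i j : Fin n) (hij : i < j) :
    ((Finset.univ.filter (fun x : Fin n => i < τ x ∧ τ x < j)).card : ℤ)
      = (j : ℤ) - (i : ℤ) - 1 := by
  have h1 : Finset.univ.filter (fun x : Fin n => i < τ x ∧ τ x < j)
      = (Finset.Ioo i j).image τ.symm := by
    ext x
    simp only [Finset.mem_filter, Finset.mem_univ, true_and, Finset.mem_image, Finset.mem_Ioo]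
    constructor
    · intro h; exact ⟨τ x, h, τ.symm_apply_apply x⟩
    · rintro ⟨v, hv, rfl⟩; rwa [τ.apply_symm_apply]
  rw [h1, Finset.card_image_of_injective _ τ.symm.injective, Fin.card_Ioo]
  have : i.val + 1 ≤ j.val := hij
  push_cast
  omega

lemma D2 {n : ℕ} (Λ : Fin n → ℝ) (hΛ : ∀ a b : Fin n, a < b → 0 < Λ a - Λ b)
    (σ : Equiv.Perm (Fin n)) (i j : Fin n) (hij : i < j) (hba : σ.symm j < σ.symm i)
    (hd : dval Λ σ i j = 1) :
    ∀ x : Fin n, i < σ x → σ x < j → σ.symm j < x ∧ x < σ.symm i := by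
  have hbr : ¬ Λ (σ.symm j) < Λ (σ.symm i) := by have := hΛ _ _ hba; linarith
  rw [dval, if_neg hbr] at hd
  set τ := Equiv.swap i j * σ with hτdef
  have hts : Equiv.swap i j * τ = σ := by
    rw [hτdef, ← mul_assoc, Equiv.swap_mul_self, one_mul]
  have hτsi : τ.symm i = σ.symm j := by
    have h : τ (σ.symm j) = i := by
      show Equiv.swap i j (σ (σ.symm j)) = i
      rw [σ.apply_symm_apply, Equiv.swap_apply_right]
    rw [← h, τ.symm_apply_apply]
  have hτsj : τ.symm j = σ.symm i := by
    have h : τ (σ.symm i) = j := by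
      show Equiv.swap i j (σ (σ.symm i)) = j
      rw [σ.apply_symm_apply, Equiv.swap_apply_left]
    rw [← h, τ.symm_apply_apply]
  have hA := lemA τ i j hij (by rw [hτsi, hτsj]; exact hba)
  rw [hts, hτsi, hτsj] at hA
  -- M := the filter set appearing in hA
  set Mset := Finset.univ.filter
      (fun x : Fin n => σ.symm j < x ∧ x < σ.symm i ∧ i < τ x ∧ τ x < j) with hM
  set Kset := Finset.univ.filter (fun x : Fin n => i < τ x ∧ τ x < j) with hK
  have hsub : Mset ⊆ Kset := by
    rw [hM, hK]
    intro x hx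
    simp only [Finset.mem_filter, Finset.mem_univ, true_and] at hx ⊢
    exact ⟨hx.2.2.1, hx.2.2.2⟩
  have hKcard : (Kset.card : ℤ) = (j : ℤ) - (i : ℤ) - 1 := card_val_interval τ i j hij
  have hMcard : (Mset.card : ℤ) = (j : ℤ) - (i : ℤ) - 1 := by linarith
  have heq : Mset = Kset := by
    apply Finset.eq_of_subset_of_card_le hsub
    omega
  intro x h1 h2
  have hτx : τ x = σ x := by
    show Equiv.swap i j (σ x) = σ x
    apply Equiv.swap_apply_of_ne_of_ne
    · exact fun hh => absurd (hh ▸ h1) (lt_irrefl i)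
    · exact fun hh => absurd (hh ▸ h2) (lt_irrefl j)
  have hxK : x ∈ Kset := by
    rw [hK]; simp only [Finset.mem_filter, Finset.mem_univ, true_and, hτx]
    exact ⟨h1, h2⟩
  rw [← heq, hM] at hxK
  simp only [Finset.mem_filter, Finset.mem_univ, true_and] at hxK
  exact ⟨hxK.1, hxK.2.1⟩

lemma pairing_rootv {n : ℕ} (v : Fin n → ℝ) {i j : Fin n} (h : i ≠ j) :
    pairing v (rootv n i j) = v i - v j := by
  unfold pairing rootv
  have hp : ∀ t : Fin n, v t * ((if t = i then (1:ℝ) else 0) - (if t = j then 1 else 0))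
      = (if t = i then v t else 0) - (if t = j then v t else 0) := by
    intro t
    by_cases h1 : t = i <;> by_cases h2 : t = j <;> simp_all
  rw [Finset.sum_congr rfl (fun t _ => hp t), Finset.sum_sub_distrib]
  simp

lemma rootv_inj {n : ℕ} {u v p q : Fin n} (huv : u ≠ v) (hpq : p ≠ q)
    (h : rootv n u v = rootv n p q) : u = p ∧ v = q := by
  have hp := congrFun h p
  have hq := congrFun h q
  simp only [rootv, if_pos rfl, if_neg hpq, if_neg (Ne.symm hpq)] at hp hq
  have h1 : p = u := by
    by_cases a1 : p = u
    · exact a1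
    · exfalso; by_cases a2 : p = v <;> norm_num [a1, a2, huv, Ne.symm huv] at hp
  have h2 : q = v := by
    by_cases a1 : q = v
    · exact a1
    · exfalso; by_cases a2 : q = u <;> norm_num [a1, a2, huv, Ne.symm huv] at hq
  exact ⟨h1.symm, h2.symm⟩

lemma resolveE {n : ℕ} (Λ : Fin n → ℝ) (r : ℤ)
    (hΛ : ∀ a b : Fin n, a < b → 0 < Λ a - Λ b ∧ Λ a - Λ b < (r : ℝ))
    (m : ℤ) (hm0 : 0 < m) (hm1 : m < r) (x y : Fin n) (hxy : x ≠ y) (d : ℤ)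
    (h : Λ x - Λ y = (m : ℝ) + (r : ℝ) * (d : ℤ)) :
    (x < y ∧ (m : ℝ) = Λ x - Λ y) ∨ (y < x ∧ (m : ℝ) = Λ x - Λ y + (r : ℝ)) := by
  have hr0 : (0 : ℝ) < (r : ℝ) := by
    have : (0 : ℤ) < r := lt_trans hm0 hm1
    exact_mod_cast this
  have hm0' : (0 : ℝ) < (m : ℝ) := by exact_mod_cast hm0
  have hm1' : (m : ℝ) < (r : ℝ) := by exact_mod_cast hm1
  rcases hxy.lt_or_gt with hlt | hlt
  · left
    refine ⟨hlt, ?_⟩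
    obtain ⟨hb1, hb2⟩ := hΛ x y hlt
    have hd1 : (r : ℝ) * d < (r : ℝ) * 1 := by linarith
    have hd2 : (r : ℝ) * (-1) < (r : ℝ) * d := by linarith
    have e1 : (d : ℝ) < 1 := lt_of_mul_lt_mul_left hd1 (le_of_lt hr0)
    have e2 : (-1 : ℝ) < (d : ℝ) := lt_of_mul_lt_mul_left hd2 (le_of_lt hr0)
    have e1' : d < 1 := by exact_mod_cast e1
    have e2' : (-1 : ℤ) < d := by exact_mod_cast e2
    have : d = 0 := by omega
    subst this
    push_cast at h
    linarith
  · right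
    refine ⟨hlt, ?_⟩
    obtain ⟨hb1, hb2⟩ := hΛ y x hlt
    have hd1 : (r : ℝ) * d < (r : ℝ) * 0 := by linarith
    have hd2 : (r : ℝ) * (-2) < (r : ℝ) * d := by linarith
    have e1 : (d : ℝ) < 0 := lt_of_mul_lt_mul_left hd1 (le_of_lt hr0)
    have e2 : (-2 : ℝ) < (d : ℝ) := lt_of_mul_lt_mul_left hd2 (le_of_lt hr0)
    have e1' : d < 0 := by exact_mod_cast e1
    have e2' : (-2 : ℤ) < d := by exact_mod_cast e2
    have : d = -1 := by omega
    subst this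
    push_cast at h
    linarith

/-- Case `(α,β) = 1`, `α ≠ β`.  Let `α = ε_i - ε_j`, `β = ε_k - ε_l` be
distinct positive roots with `(α,β) = 1`; set `m = m_α(λ)`, `m' = m_β(λ^α)`, and
suppose `(λ, λ^α, λ^{α,β})` is admissible.  Then: if `α - β` is a positive root
`ε_p - ε_q`, then `m_β(λ) = m + m'` and `m_{α-β}(λ^β) = m`, so
`λ^{β,α-β} = λ^{α,β}`; if `β - α` is a positive root `ε_p - ε_q`, then
`m_{β-α}(λ) = m'` and `m_α(λ^{β-α}) = m + m'`, so `λ^{β-α,α} = λ^{α,β}`. -/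
theorem stmt8 (n : ℕ) (r : ℤ) (hr : (n : ℤ) + 2 ≤ r) (Λ : Fin n → ℝ)
    (hΛ : ∀ a b : Fin n, a < b → 0 < Λ a - Λ b ∧ Λ a - Λ b < (r : ℝ))
    (σ : Equiv.Perm (Fin n)) (γ : Fin n → ℤ) (hγ : (∑ t, γ t) = 0)
    (lam : Fin n → ℝ) (hlam : lam = fun t => Λ (σ.symm t) + (r : ℝ) * (γ t : ℝ))
    (i j k l : Fin n) (hij : i < j) (hkl : k < l)
    (hpair : pairing (rootv n i j) (rootv n k l) = 1)
    (hne : (i, j) ≠ (k, l))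
    (m m' : ℤ)
    (hm : isM r lam (rootv n i j) m)
    (hm' : isM r (fun t => lam t - (m : ℝ) * rootv n i j t) (rootv n k l) m')
    (had1 : dval Λ σ i j = 1)
    (had2 : dval Λ (Equiv.swap i j * σ) k l = 1) :
    (∀ p q : Fin n, p < q →
      (fun t => rootv n i j t - rootv n k l t) = rootv n p q →
      isM r lam (rootv n k l) (m + m') ∧
      isM r (fun t => lam t - ((m : ℝ) + (m' : ℝ)) * rootv n k l t) (rootv n p q) m ∧
      (fun t => lam t - ((m : ℝ) + (m' : ℝ)) * rootv n k l t - (m : ℝ) * rootv n p q t) =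
        (fun t => lam t - (m : ℝ) * rootv n i j t - (m' : ℝ) * rootv n k l t)) ∧
    (∀ p q : Fin n, p < q →
      (fun t => rootv n k l t - rootv n i j t) = rootv n p q →
      isM r lam (rootv n p q) m' ∧
      isM r (fun t => lam t - (m' : ℝ) * rootv n p q t) (rootv n i j) (m + m') ∧
      (fun t => lam t - (m' : ℝ) * rootv n p q t - ((m : ℝ) + (m' : ℝ)) * rootv n i j t) =
        (fun t => lam t - (m : ℝ) * rootv n i j t - (m' : ℝ) * rootv n k l t)) := by
  have hΛ' : ∀ a b : Fin n, a < b → 0 < Λ a - Λ b := fun a b h => (hΛ a b h).1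
  have hijne : i ≠ j := ne_of_lt hij
  have hklne : k ≠ l := ne_of_lt hkl
  obtain ⟨a, ha⟩ : ∃ x, σ.symm i = x := ⟨_, rfl⟩
  obtain ⟨b, hb⟩ : ∃ x, σ.symm j = x := ⟨_, rfl⟩
  have hσa : σ a = i := by rw [← ha, σ.apply_symm_apply]
  have hσb : σ b = j := by rw [← hb, σ.apply_symm_apply]
  have habne : a ≠ b := fun h => hijne (by rw [← hσa, ← hσb, h])
  have hlamt : ∀ (t x : Fin n), σ.symm t = x → lam t = Λ x + (r : ℝ) * (γ t : ℝ) := by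
    intro t x hx
    rw [hlam]
    show Λ (σ.symm t) + (r : ℝ) * (γ t : ℝ) = _
    rw [hx]
  have hlami : lam i = Λ a + (r : ℝ) * (γ i : ℝ) := hlamt i a ha
  have hlamj : lam j = Λ b + (r : ℝ) * (γ j : ℝ) := hlamt j b hb
  obtain ⟨hm0, hm1, c1, hc1⟩ := hm
  obtain ⟨hm'0, hm'1, c2, hc2⟩ := hm'
  rw [pairing_rootv lam hijne] at hc1
  have hmd : Λ a - Λ b = (m : ℝ) + (r : ℝ) * ((c1 - γ i + γ j : ℤ) : ℝ) := by
    rw [hlami, hlamj] at hc1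
    push_cast
    push_cast at hc1
    linarith
  have hmE := resolveE Λ r hΛ m hm0 hm1 a b habne _ hmd
  rw [pairing_rootv _ hklne] at hc2
  have hcase : (k = i ∧ l ≠ j) ∨ (l = j ∧ k ≠ i) := by
    rw [pairing_rootv _ hklne] at hpair
    by_cases h1 : k = i <;> by_cases h2 : l = j
    · exfalso; exact hne (by rw [h1, h2])
    · exact Or.inl ⟨h1, h2⟩
    · exact Or.inr ⟨h2, h1⟩
    · exfalso
      by_cases h3 : k = j <;> by_cases h4 : l = i <;>
        norm_num [rootv, h1, h2, h3, h4, hijne, Ne.symm hijne] at hpair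
  constructor
  · -- branch 1 : α - β positive
    intro p q hpq heq
    rcases hcase with ⟨hk, hlj⟩ | ⟨hl, hki⟩
    · -- case A : k = i, α - β = ε_l - ε_j
      have hk' : i = k := hk.symm
      clear hk
      subst hk'
      have heq' : rootv n l j = rootv n p q := by
        funext t
        have h5 := congrFun heq t
        simp only [rootv] at h5 ⊢
        linarith
      obtain ⟨hpl, hqj⟩ := rootv_inj hlj (ne_of_lt hpq) heq'
      subst hpl
      subst hqj
      -- now p := l, q := j, and hpq : l < j
      obtain ⟨c, hc⟩ : ∃ x, σ.symm l = x := ⟨_, rfl⟩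
      have hσc : σ c = l := by rw [← hc, σ.apply_symm_apply]
      have hil : i < l := hkl
      have hlnei : l ≠ i := ne_of_gt hil
      have hca : c ≠ a := fun h => hlnei (by rw [← hσc, ← hσa, h])
      have hcb : c ≠ b := fun h => hlj (by rw [← hσc, ← hσb, h])
      have hbcne : b ≠ c := Ne.symm hcb
      have hlaml : lam l = Λ c + (r : ℝ) * (γ l : ℝ) := hlamt l c hc
      have hrv1 : rootv n i j i = (1:ℝ) := by simp [rootv, hijne]
      have hrv2 : rootv n i j l = (0:ℝ) := by simp [rootv, hlnei, hlj]
      rw [hrv1, hrv2] at hc2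
      have hro1 : rootv n i l l = (-1:ℝ) := by simp [rootv, hlnei]
      have hro2 : rootv n i l j = (0:ℝ) := by simp [rootv, Ne.symm hijne, Ne.symm hlj]
      have hfe : (fun t => lam t - ((m:ℝ) + (m':ℝ)) * rootv n i l t - (m:ℝ) * rootv n l j t)
          = (fun t => lam t - (m:ℝ) * rootv n i j t - (m':ℝ) * rootv n i l t) := by
        funext t; simp only [rootv]; ring
      have hiσc : i < σ c := by rw [hσc]; exact hil
      have hσcj : σ c < j := by rw [hσc]; exact hpq
      rcases hmE with ⟨hab', hmv⟩ | ⟨hba', hmv⟩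
      · -- a < b
        have hm'd : Λ b - Λ c = (m' : ℝ) + (r : ℝ) * ((c2 - γ i + γ l : ℤ) : ℝ) := by
          rw [hlami, hlaml] at hc2
          push_cast
          push_cast at hc2
          linarith
        have hm'E := resolveE Λ r hΛ m' hm'0 hm'1 b c hbcne _ hm'd
        rcases hm'E with ⟨hbc', hm'v⟩ | ⟨hcb', hm'v⟩
        · -- a < b, b < c : direct
          have hac : a < c := lt_trans hab' hbc'
          refine ⟨⟨by omega, ?_, ⟨γ i - γ l, ?_⟩⟩, ⟨hm0, hm1, ⟨γ l - γ j, ?_⟩⟩, hfe⟩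
          · have hx : ((m + m' : ℤ) : ℝ) < (r : ℝ) := by
              push_cast; linarith [(hΛ a c hac).2]
            exact_mod_cast hx
          · rw [pairing_rootv lam (ne_of_lt hil), hlami, hlaml]
            push_cast; linarith
          · rw [pairing_rootv _ hlj]
            simp only [hro1, hro2]
            rw [hlaml, hlamj]
            push_cast; linarith
        · -- a < b, c < b : need c < a via D1
          have hD := D1 Λ hΛ' σ i j hij (by rw [ha, hb]; exact hab') had1
          have hclta : c < a := by
            rcases hca.lt_or_gt with h | h
            · exact h
            · exact absurd ⟨by rw [ha]; exact h, by rw [hb]; exact hcb'⟩ (hD c hiσc hσcj)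
          refine ⟨⟨by omega, ?_, ⟨γ i - γ l - 1, ?_⟩⟩, ⟨hm0, hm1, ⟨γ l - γ j + 1, ?_⟩⟩, hfe⟩
          · have hx : ((m + m' : ℤ) : ℝ) < (r : ℝ) := by
              push_cast; linarith [(hΛ c a hclta).1]
            exact_mod_cast hx
          · rw [pairing_rootv lam (ne_of_lt hil), hlami, hlaml]
            push_cast; linarith
          · rw [pairing_rootv _ hlj]
            simp only [hro1, hro2]
            rw [hlaml, hlamj]
            push_cast; linarith
      · -- b < a
        have hm'd : Λ b - Λ c = (m' : ℝ) + (r : ℝ) * ((c2 - γ i + γ l + 1 : ℤ) : ℝ) := by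
          rw [hlami, hlaml] at hc2
          push_cast
          push_cast at hc2
          linarith
        have hm'E := resolveE Λ r hΛ m' hm'0 hm'1 b c hbcne _ hm'd
        have hD := D2 Λ hΛ' σ i j hij (by rw [ha, hb]; exact hba') had1
        have hDc := hD c hiσc hσcj
        rw [ha, hb] at hDc
        rcases hm'E with ⟨hbc', hm'v⟩ | ⟨hcb', hm'v⟩
        · -- b < a, b < c : D2 gives c < a
          have hclta : c < a := hDc.2
          refine ⟨⟨by omega, ?_, ⟨γ i - γ l - 1, ?_⟩⟩, ⟨hm0, hm1, ⟨γ l - γ j, ?_⟩⟩, hfe⟩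
          · have hx : ((m + m' : ℤ) : ℝ) < (r : ℝ) := by
              push_cast; linarith [(hΛ c a hclta).1]
            exact_mod_cast hx
          · rw [pairing_rootv lam (ne_of_lt hil), hlami, hlaml]
            push_cast; linarith
          · rw [pairing_rootv _ hlj]
            simp only [hro1, hro2]
            rw [hlaml, hlamj]
            push_cast; linarith
        · -- b < a, c < b : contradiction with D2 (b < c)
          exact absurd hDc.1 (lt_asymm hcb')
    · -- case B : l = j, α - β = ε_i - ε_k
      have hl' : j = l := hl.symm
      clear hl
      subst hl'
      have heq' : rootv n i k = rootv n p q := by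
        funext t
        have h5 := congrFun heq t
        simp only [rootv] at h5 ⊢
        linarith
      obtain ⟨hpi, hqk⟩ := rootv_inj (Ne.symm hki) (ne_of_lt hpq) heq'
      subst hpi
      subst hqk
      obtain ⟨c, hc⟩ : ∃ x, σ.symm k = x := ⟨_, rfl⟩
      have hσc : σ c = k := by rw [← hc, σ.apply_symm_apply]
      have hkj : k ≠ j := hklne
      have hca : c ≠ a := fun h => hki (by rw [← hσc, ← hσa, h])
      have hcb : c ≠ b := fun h => hkj (by rw [← hσc, ← hσb, h])
      have hlamk : lam k = Λ c + (r : ℝ) * (γ k : ℝ) := hlamt k c hc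
      have hrv1 : rootv n i j k = (0:ℝ) := by simp [rootv, hki, hkj]
      have hrv2 : rootv n i j j = (-1:ℝ) := by simp [rootv, Ne.symm hijne]
      rw [hrv1, hrv2] at hc2
      have hro1 : rootv n k j i = (0:ℝ) := by simp [rootv, Ne.symm hki, hijne]
      have hro2 : rootv n k j k = (1:ℝ) := by simp [rootv, hkj]
      have hfe : (fun t => lam t - ((m:ℝ) + (m':ℝ)) * rootv n k j t - (m:ℝ) * rootv n i k t)
          = (fun t => lam t - (m:ℝ) * rootv n i j t - (m':ℝ) * rootv n k j t) := by
        funext t; simp only [rootv]; ring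
      have hiσc : i < σ c := by rw [hσc]; exact hpq
      have hσcj : σ c < j := by rw [hσc]; exact hkl
      rcases hmE with ⟨hab', hmv⟩ | ⟨hba', hmv⟩
      · -- a < b
        have hm'd : Λ c - Λ a = (m' : ℝ) + (r : ℝ) * ((c2 - γ k + γ j : ℤ) : ℝ) := by
          rw [hlamk, hlamj] at hc2
          push_cast
          push_cast at hc2
          linarith
        have hm'E := resolveE Λ r hΛ m' hm'0 hm'1 c a hca _ hm'd
        rcases hm'E with ⟨hclta', hm'v⟩ | ⟨haltc', hm'v⟩
        · -- a < b, c < a : direct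
          have hcltb : c < b := lt_trans hclta' hab'
          refine ⟨⟨by omega, ?_, ⟨γ k - γ j, ?_⟩⟩, ⟨hm0, hm1, ⟨γ i - γ k, ?_⟩⟩, hfe⟩
          · have hx : ((m + m' : ℤ) : ℝ) < (r : ℝ) := by
              push_cast; linarith [(hΛ c b hcltb).2]
            exact_mod_cast hx
          · rw [pairing_rootv lam hkj, hlamk, hlamj]
            push_cast; linarith
          · rw [pairing_rootv _ (ne_of_lt hpq)]
            simp only [hro1, hro2]
            rw [hlami, hlamk]
            push_cast; linarith
        · -- a < b, a < c : D1 gives b < c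
          have hD := D1 Λ hΛ' σ i j hij (by rw [ha, hb]; exact hab') had1
          have hbltc : b < c := by
            rcases hcb.lt_or_gt with h | h
            · exact absurd ⟨by rw [ha]; exact haltc', by rw [hb]; exact h⟩ (hD c hiσc hσcj)
            · exact h
          refine ⟨⟨by omega, ?_, ⟨γ k - γ j - 1, ?_⟩⟩, ⟨hm0, hm1, ⟨γ i - γ k + 1, ?_⟩⟩, hfe⟩
          · have hx : ((m + m' : ℤ) : ℝ) < (r : ℝ) := by
              push_cast; linarith [(hΛ b c hbltc).1]
            exact_mod_cast hx
          · rw [pairing_rootv lam hkj, hlamk, hlamj]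
            push_cast; linarith
          · rw [pairing_rootv _ (ne_of_lt hpq)]
            simp only [hro1, hro2]
            rw [hlami, hlamk]
            push_cast; linarith
      · -- b < a
        have hm'd : Λ c - Λ a = (m' : ℝ) + (r : ℝ) * ((c2 - γ k + γ j + 1 : ℤ) : ℝ) := by
          rw [hlamk, hlamj] at hc2
          push_cast
          push_cast at hc2
          linarith
        have hm'E := resolveE Λ r hΛ m' hm'0 hm'1 c a hca _ hm'd
        have hD := D2 Λ hΛ' σ i j hij (by rw [ha, hb]; exact hba') had1
        have hDc := hD c hiσc hσcj
        rw [ha, hb] at hDc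
        rcases hm'E with ⟨hclta', hm'v⟩ | ⟨haltc', hm'v⟩
        · -- b < a, c < a : D2 gives b < c
          have hbltc : b < c := hDc.1
          refine ⟨⟨by omega, ?_, ⟨γ k - γ j - 1, ?_⟩⟩, ⟨hm0, hm1, ⟨γ i - γ k, ?_⟩⟩, hfe⟩
          · have hx : ((m + m' : ℤ) : ℝ) < (r : ℝ) := by
              push_cast; linarith [(hΛ b c hbltc).1]
            exact_mod_cast hx
          · rw [pairing_rootv lam hkj, hlamk, hlamj]
            push_cast; linarith
          · rw [pairing_rootv _ (ne_of_lt hpq)]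
            simp only [hro1, hro2]
            rw [hlami, hlamk]
            push_cast; linarith
        · -- b < a, a < c : contradiction
          exact absurd hDc.2 (lt_asymm haltc')
  · -- branch 2 : β - α positive
    intro p q hpq heq
    rcases hcase with ⟨hk, hlj⟩ | ⟨hl, hki⟩
    · -- case A : k = i, β - α = ε_j - ε_l
      have hk' : i = k := hk.symm
      clear hk
      subst hk'
      have heq' : rootv n j l = rootv n p q := by
        funext t
        have h5 := congrFun heq t
        simp only [rootv] at h5 ⊢
        linarith
      obtain ⟨hpj, hql⟩ := rootv_inj (Ne.symm hlj) (ne_of_lt hpq) heq'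
      subst hpj
      subst hql
      -- now p := j, q := l, hpq : j < l
      obtain ⟨c, hc⟩ : ∃ x, σ.symm l = x := ⟨_, rfl⟩
      have hσc : σ c = l := by rw [← hc, σ.apply_symm_apply]
      have hil : i < l := hkl
      have hlnei : l ≠ i := ne_of_gt hil
      have hca : c ≠ a := fun h => hlnei (by rw [← hσc, ← hσa, h])
      have hcb : c ≠ b := fun h => hlj (by rw [← hσc, ← hσb, h])
      have hbcne : b ≠ c := Ne.symm hcb
      have hlaml : lam l = Λ c + (r : ℝ) * (γ l : ℝ) := hlamt l c hc
      have hrv1 : rootv n i j i = (1:ℝ) := by simp [rootv, hijne]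
      have hrv2 : rootv n i j l = (0:ℝ) := by simp [rootv, hlnei, hlj]
      rw [hrv1, hrv2] at hc2
      have hro1 : rootv n j l i = (0:ℝ) := by simp [rootv, hijne, ne_of_lt hil]
      have hro2 : rootv n j l j = (1:ℝ) := by simp [rootv, ne_of_lt hpq]
      have hfe : (fun t => lam t - (m':ℝ) * rootv n j l t - ((m:ℝ) + (m':ℝ)) * rootv n i j t)
          = (fun t => lam t - (m:ℝ) * rootv n i j t - (m':ℝ) * rootv n i l t) := by
        funext t; simp only [rootv]; ring
      have hτi : (Equiv.swap i j * σ).symm i = b := by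
        rw [Equiv.symm_apply_eq]
        show i = Equiv.swap i j (σ b)
        rw [hσb, Equiv.swap_apply_right]
      have hτl : (Equiv.swap i j * σ).symm l = c := by
        rw [Equiv.symm_apply_eq]
        show l = Equiv.swap i j (σ c)
        rw [hσc, Equiv.swap_apply_of_ne_of_ne hlnei hlj]
      have hτa : (Equiv.swap i j * σ) a = j := by
        show Equiv.swap i j (σ a) = j
        rw [hσa, Equiv.swap_apply_left]
      have hiτa : i < (Equiv.swap i j * σ) a := by rw [hτa]; exact hij
      have hτal : (Equiv.swap i j * σ) a < l := by rw [hτa]; exact hpq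
      rcases hmE with ⟨hab', hmv⟩ | ⟨hba', hmv⟩
      · -- a < b
        have hm'd : Λ b - Λ c = (m' : ℝ) + (r : ℝ) * ((c2 - γ i + γ l : ℤ) : ℝ) := by
          rw [hlami, hlaml] at hc2
          push_cast
          push_cast at hc2
          linarith
        have hm'E := resolveE Λ r hΛ m' hm'0 hm'1 b c hbcne _ hm'd
        rcases hm'E with ⟨hbc', hm'v⟩ | ⟨hcb', hm'v⟩
        · -- a < b, b < c : direct
          have hac : a < c := lt_trans hab' hbc'
          refine ⟨⟨hm'0, hm'1, ⟨γ j - γ l, ?_⟩⟩, ⟨by omega, ?_, ⟨γ i - γ j, ?_⟩⟩, hfe⟩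
          · rw [pairing_rootv lam (ne_of_lt hpq), hlamj, hlaml]
            push_cast; linarith
          · have hx : ((m + m' : ℤ) : ℝ) < (r : ℝ) := by
              push_cast; linarith [(hΛ a c hac).2]
            exact_mod_cast hx
          · rw [pairing_rootv _ hijne]
            simp only [hro1, hro2]
            rw [hlami, hlamj]
            push_cast; linarith
        · -- a < b, c < b : D2 on τ gives c < a
          have hD := D2 Λ hΛ' (Equiv.swap i j * σ) i l hil (by rw [hτl, hτi]; exact hcb') had2
          have hDa := hD a hiτa hτal
          rw [hτl, hτi] at hDa
          have hclta : c < a := hDa.1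
          refine ⟨⟨hm'0, hm'1, ⟨γ j - γ l - 1, ?_⟩⟩, ⟨by omega, ?_, ⟨γ i - γ j, ?_⟩⟩, hfe⟩
          · rw [pairing_rootv lam (ne_of_lt hpq), hlamj, hlaml]
            push_cast; linarith
          · have hx : ((m + m' : ℤ) : ℝ) < (r : ℝ) := by
              push_cast; linarith [(hΛ c a hclta).1]
            exact_mod_cast hx
          · rw [pairing_rootv _ hijne]
            simp only [hro1, hro2]
            rw [hlami, hlamj]
            push_cast; linarith
      · -- b < a
        have hm'd : Λ b - Λ c = (m' : ℝ) + (r : ℝ) * ((c2 - γ i + γ l + 1 : ℤ) : ℝ) := by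
          rw [hlami, hlaml] at hc2
          push_cast
          push_cast at hc2
          linarith
        have hm'E := resolveE Λ r hΛ m' hm'0 hm'1 b c hbcne _ hm'd
        rcases hm'E with ⟨hbc', hm'v⟩ | ⟨hcb', hm'v⟩
        · -- b < a, b < c : D1 on τ gives c < a
          have hD := D1 Λ hΛ' (Equiv.swap i j * σ) i l hil (by rw [hτi, hτl]; exact hbc') had2
          have hDa := hD a hiτa hτal
          rw [hτi, hτl] at hDa
          have hclta : c < a := by
            rcases hca.lt_or_gt with h | h
            · exact h
            · exact absurd ⟨hba', h⟩ hDa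
          refine ⟨⟨hm'0, hm'1, ⟨γ j - γ l, ?_⟩⟩, ⟨by omega, ?_, ⟨γ i - γ j - 1, ?_⟩⟩, hfe⟩
          · rw [pairing_rootv lam (ne_of_lt hpq), hlamj, hlaml]
            push_cast; linarith
          · have hx : ((m + m' : ℤ) : ℝ) < (r : ℝ) := by
              push_cast; linarith [(hΛ c a hclta).1]
            exact_mod_cast hx
          · rw [pairing_rootv _ hijne]
            simp only [hro1, hro2]
            rw [hlami, hlamj]
            push_cast; linarith
        · -- b < a, c < b : contradiction via D2 on τ
          have hD := D2 Λ hΛ' (Equiv.swap i j * σ) i l hil (by rw [hτl, hτi]; exact hcb') had2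
          have hDa := hD a hiτa hτal
          rw [hτl, hτi] at hDa
          exact absurd hDa.2 (lt_asymm hba')
    · -- case B : l = j, β - α = ε_k - ε_i
      have hl' : j = l := hl.symm
      clear hl
      subst hl'
      have heq' : rootv n k i = rootv n p q := by
        funext t
        have h5 := congrFun heq t
        simp only [rootv] at h5 ⊢
        linarith
      obtain ⟨hpk, hqi⟩ := rootv_inj hki (ne_of_lt hpq) heq'
      subst hpk
      subst hqi
      -- now p := k, q := i, hpq : k < i
      obtain ⟨c, hc⟩ : ∃ x, σ.symm k = x := ⟨_, rfl⟩
      have hσc : σ c = k := by rw [← hc, σ.apply_symm_apply]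
      have hkj : k ≠ j := hklne
      have hkltj : k < j := hkl
      have hca : c ≠ a := fun h => hki (by rw [← hσc, ← hσa, h])
      have hcb : c ≠ b := fun h => hkj (by rw [← hσc, ← hσb, h])
      have hlamk : lam k = Λ c + (r : ℝ) * (γ k : ℝ) := hlamt k c hc
      have hrv1 : rootv n i j k = (0:ℝ) := by simp [rootv, hki, hkj]
      have hrv2 : rootv n i j j = (-1:ℝ) := by simp [rootv, Ne.symm hijne]
      rw [hrv1, hrv2] at hc2
      have hro1 : rootv n k i i = (-1:ℝ) := by simp [rootv, Ne.symm hki]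
      have hro2 : rootv n k i j = (0:ℝ) := by simp [rootv, Ne.symm hkj, Ne.symm hijne]
      have hfe : (fun t => lam t - (m':ℝ) * rootv n k i t - ((m:ℝ) + (m':ℝ)) * rootv n i j t)
          = (fun t => lam t - (m:ℝ) * rootv n i j t - (m':ℝ) * rootv n k j t) := by
        funext t; simp only [rootv]; ring
      have hτk : (Equiv.swap i j * σ).symm k = c := by
        rw [Equiv.symm_apply_eq]
        show k = Equiv.swap i j (σ c)
        rw [hσc, Equiv.swap_apply_of_ne_of_ne hki hkj]
      have hτj : (Equiv.swap i j * σ).symm j = a := by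
        rw [Equiv.symm_apply_eq]
        show j = Equiv.swap i j (σ a)
        rw [hσa, Equiv.swap_apply_left]
      have hτb : (Equiv.swap i j * σ) b = i := by
        show Equiv.swap i j (σ b) = i
        rw [hσb, Equiv.swap_apply_right]
      have hkτb : k < (Equiv.swap i j * σ) b := by rw [hτb]; exact hpq
      have hτbj : (Equiv.swap i j * σ) b < j := by rw [hτb]; exact hij
      rcases hmE with ⟨hab', hmv⟩ | ⟨hba', hmv⟩
      · -- a < b
        have hm'd : Λ c - Λ a = (m' : ℝ) + (r : ℝ) * ((c2 - γ k + γ j : ℤ) : ℝ) := by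
          rw [hlamk, hlamj] at hc2
          push_cast
          push_cast at hc2
          linarith
        have hm'E := resolveE Λ r hΛ m' hm'0 hm'1 c a hca _ hm'd
        rcases hm'E with ⟨hclta', hm'v⟩ | ⟨haltc', hm'v⟩
        · -- a < b, c < a : direct
          have hcltb : c < b := lt_trans hclta' hab'
          refine ⟨⟨hm'0, hm'1, ⟨γ k - γ i, ?_⟩⟩, ⟨by omega, ?_, ⟨γ i - γ j, ?_⟩⟩, hfe⟩
          · rw [pairing_rootv lam (ne_of_lt hpq), hlamk, hlami]
            push_cast; linarith
          · have hx : ((m + m' : ℤ) : ℝ) < (r : ℝ) := by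
              push_cast; linarith [(hΛ c b hcltb).2]
            exact_mod_cast hx
          · rw [pairing_rootv _ hijne]
            simp only [hro1, hro2]
            rw [hlami, hlamj]
            push_cast; linarith
        · -- a < b, a < c : D2 on τ gives b < c
          have hD := D2 Λ hΛ' (Equiv.swap i j * σ) k j hkltj
            (by rw [hτj, hτk]; exact haltc') had2
          have hDb := hD b hkτb hτbj
          rw [hτj, hτk] at hDb
          have hbltc : b < c := hDb.2
          refine ⟨⟨hm'0, hm'1, ⟨γ k - γ i - 1, ?_⟩⟩, ⟨by omega, ?_, ⟨γ i - γ j, ?_⟩⟩, hfe⟩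
          · rw [pairing_rootv lam (ne_of_lt hpq), hlamk, hlami]
            push_cast; linarith
          · have hx : ((m + m' : ℤ) : ℝ) < (r : ℝ) := by
              push_cast; linarith [(hΛ b c hbltc).1]
            exact_mod_cast hx
          · rw [pairing_rootv _ hijne]
            simp only [hro1, hro2]
            rw [hlami, hlamj]
            push_cast; linarith
      · -- b < a
        have hm'd : Λ c - Λ a = (m' : ℝ) + (r : ℝ) * ((c2 - γ k + γ j + 1 : ℤ) : ℝ) := by
          rw [hlamk, hlamj] at hc2
          push_cast
          push_cast at hc2
          linarith
        have hm'E := resolveE Λ r hΛ m' hm'0 hm'1 c a hca _ hm'd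
        rcases hm'E with ⟨hclta', hm'v⟩ | ⟨haltc', hm'v⟩
        · -- b < a, c < a : D1 on τ gives b < c
          have hD := D1 Λ hΛ' (Equiv.swap i j * σ) k j hkltj
            (by rw [hτk, hτj]; exact hclta') had2
          have hDb := hD b hkτb hτbj
          rw [hτk, hτj] at hDb
          have hbltc : b < c := by
            rcases hcb.lt_or_gt with h | h
            · exact absurd ⟨h, hba'⟩ hDb
            · exact h
          refine ⟨⟨hm'0, hm'1, ⟨γ k - γ i, ?_⟩⟩, ⟨by omega, ?_, ⟨γ i - γ j - 1, ?_⟩⟩, hfe⟩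
          · rw [pairing_rootv lam (ne_of_lt hpq), hlamk, hlami]
            push_cast; linarith
          · have hx : ((m + m' : ℤ) : ℝ) < (r : ℝ) := by
              push_cast; linarith [(hΛ b c hbltc).1]
            exact_mod_cast hx
          · rw [pairing_rootv _ hijne]
            simp only [hro1, hro2]
            rw [hlami, hlamj]
            push_cast; linarith
        · -- b < a, a < c : contradiction via D2 on τ
          have hD := D2 Λ hΛ' (Equiv.swap i j * σ) k j hkltj
            (by rw [hτj, hτk]; exact haltc') had2
          have hDb := hD b hkτb hτbj
          rw [hτj, hτk] at hDb
          exact absurd hDb.1 (lt_asymm hba')
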